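/- For a strict ranking ≻ on M items and any multisets X, Y: if u(X) ≥ u(Y) for all binary utility functions U_k consistent with ≻ (where U_k assigns 1 to the k top-ranked items and 0 to the rest, for every k ∈ {1,…,M}), then u(X) ≥ u(Y) for every additive utility function consistent with ≻. Consequently, necessary-binary dominance is equivalent to necessary (stochastic) dominance. -/
import Mathlib


variable {M : ℕ}

/- Items are identified with levels: item j : Fin M has Borda level (j : ℕ) + 1, so the
best item has level M and the worst level 1; the ranking is the order on Fin M. -/

/-- Binary (threshold) score: the number of items of X (with multiplicity) whose level is
at least k. This is the additive extension of the binary utility U_k assigning 1 to the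
items of level at least k and 0 to the rest. -/
def Ubin (k : ℕ) (X : Multiset (Fin M)) : ℕ :=
  (X.filter (fun j => k ≤ (j : ℕ) + 1)).card

/-- u is a (positive) additive utility consistent with the ranking. -/
def ConsistentF (u : Fin M → ℝ) : Prop :=
  (∀ j, 0 < u j) ∧ ∀ j j' : Fin M, u j > u j' ↔ j' < j

/-- Additive extension to multisets. -/
def msum (u : Fin M → ℝ) (X : Multiset (Fin M)) : ℝ := (X.map u).sum

open Finset

noncomputable def vext (u : Fin M → ℝ) (n : ℕ) : ℝ := if h : n < M then u ⟨n, h⟩ else 0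

noncomputable def dd (u : Fin M → ℝ) (k : ℕ) : ℝ :=
  vext u (k-1) - (if k = 1 then 0 else vext u (k-2))

lemma dd_nonneg {u : Fin M → ℝ} (hu : ConsistentF u) {k : ℕ} (h1 : 1 ≤ k) (h2 : k ≤ M) :
    0 ≤ dd u k := by
  rcases eq_or_lt_of_le h1 with h | h
  · have h0 : (0:ℕ) < M := by omega
    simp [dd, ← h, vext, h0, le_of_lt (hu.1 ⟨0, h0⟩)]
  · have hk2 : 2 ≤ k := h
    have hkm1 : k - 1 < M := by omega
    have hkm2 : k - 2 < M := by omega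
    have hlt : (⟨k-2, hkm2⟩ : Fin M) < ⟨k-1, hkm1⟩ := by
      simp [Fin.lt_def]; omega
    have := (hu.2 ⟨k-1, hkm1⟩ ⟨k-2, hkm2⟩).mpr hlt
    have hne : k ≠ 1 := by omega
    simp only [dd, vext, hkm1, hkm2, hne, if_false, dif_pos]
    linarith

lemma telescope (u : Fin M → ℝ) {m : ℕ} (h1 : 1 ≤ m) :
    ∑ k ∈ Icc 1 m, dd u k = vext u (m-1) := by
  induction m with
  | zero => omega
  | succ n ih =>
    rcases Nat.eq_or_lt_of_le h1 with h | h
    · simp [← h, dd]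
    · have hn : 1 ≤ n := by omega
      rw [Finset.sum_Icc_succ_top (by omega : 1 ≤ n+1), ih hn]
      have hne : n + 1 ≠ 1 := by omega
      simp only [dd, hne, if_false]
      have : n + 1 - 1 = n := by omega
      have h2 : n + 1 - 2 = n - 1 := by omega
      rw [this, h2]
      ring

lemma pointwise (u : Fin M → ℝ) (j : Fin M) :
    u j = ∑ k ∈ Icc 1 M, dd u k * (if k ≤ (j:ℕ)+1 then 1 else 0) := by
  have hj : (j:ℕ) + 1 ≤ M := j.2
  have hsplit : Icc 1 M = Icc 1 ((j:ℕ)+1) ∪ Icc ((j:ℕ)+2) M := by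
    ext x; simp only [mem_Icc, mem_union]; omega
  have hdisj : Disjoint (Icc 1 ((j:ℕ)+1)) (Icc ((j:ℕ)+2) M) := by
    simp only [Finset.disjoint_left, mem_Icc]; omega
  rw [hsplit, Finset.sum_union hdisj]
  have h1 : ∑ k ∈ Icc 1 ((j:ℕ)+1), dd u k * (if k ≤ (j:ℕ)+1 then 1 else 0)
      = ∑ k ∈ Icc 1 ((j:ℕ)+1), dd u k := by
    apply Finset.sum_congr rfl; intro k hk
    simp only [mem_Icc] at hk
    simp [hk.2]
  have h2 : ∑ k ∈ Icc ((j:ℕ)+2) M, dd u k * (if k ≤ (j:ℕ)+1 then 1 else 0) = 0 := by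
    apply Finset.sum_eq_zero; intro k hk
    simp only [mem_Icc] at hk
    have : ¬ (k ≤ (j:ℕ)+1) := by omega
    simp [this]
  rw [h1, h2, telescope u (by omega)]
  simp [vext, j.2]

lemma msum_eq (u : Fin M → ℝ) (X : Multiset (Fin M)) :
    msum u X = ∑ k ∈ Icc 1 M, dd u k * (Ubin k X : ℝ) := by
  induction X using Multiset.induction with
  | empty => simp [msum, Ubin]
  | cons a X ih =>
    have hub : ∀ k, (Ubin k (a ::ₘ X) : ℝ) = (if k ≤ (a:ℕ)+1 then 1 else 0) + Ubin k X := by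
      intro k
      by_cases h : k ≤ (a:ℕ)+1 <;> simp [Ubin, Multiset.filter_cons, h] <;> ring
    have hmc : msum u (a ::ₘ X) = u a + msum u X := by simp [msum]
    rw [hmc, ih, pointwise u a, ← Finset.sum_add_distrib]
    apply Finset.sum_congr rfl
    intro k _
    rw [hub k]
    ring

lemma msum_split (k : ℕ) (c : ℝ) (Z : Multiset (Fin M)) :
    msum (fun j => (if k ≤ (j:ℕ)+1 then 1 else 0) + (((j:ℕ):ℝ)+1)/c) Z
      = (Ubin k Z : ℝ) + (Z.map fun j : Fin M => ((j:ℕ):ℝ)+1).sum/c := by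
  induction Z using Multiset.induction with
  | empty => simp [msum, Ubin]
  | cons a Z ih =>
    have hub : (Ubin k (a ::ₘ Z) : ℝ) = (if k ≤ (a:ℕ)+1 then 1 else 0) + Ubin k Z := by
      by_cases h : k ≤ (a:ℕ)+1 <;> simp [Ubin, Multiset.filter_cons, h] <;> ring
    have hmc : msum (fun j => (if k ≤ (j:ℕ)+1 then 1 else 0) + (((j:ℕ):ℝ)+1)/c) (a ::ₘ Z)
        = ((if k ≤ (a:ℕ)+1 then 1 else 0) + (((a:ℕ):ℝ)+1)/c)
          + msum (fun j => (if k ≤ (j:ℕ)+1 then 1 else 0) + (((j:ℕ):ℝ)+1)/c) Z := by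
      simp [msum]
    rw [hmc, ih, hub]
    simp only [Multiset.map_cons, Multiset.sum_cons, add_div]
    ring

/-- if U_k(X) ≥ U_k(Y) for every binary threshold utility U_k,
k ∈ {1,…,M}, then u(X) ≥ u(Y) for every positive additive utility consistent with the
ranking; consequently necessary-binary dominance is equivalent to necessary dominance. -/
theorem stmt16 (X Y : Multiset (Fin M)) :
    (∀ k, 1 ≤ k → k ≤ M → Ubin k Y ≤ Ubin k X) ↔
      (∀ u : Fin M → ℝ, ConsistentF u → msum u Y ≤ msum u X) := by
  constructor
  · intro hbin u hu
    rw [msum_eq, msum_eq]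
    apply Finset.sum_le_sum
    intro k hk
    simp only [mem_Icc] at hk
    have hd := dd_nonneg hu hk.1 hk.2
    have hb : (Ubin k Y : ℝ) ≤ Ubin k X := by exact_mod_cast hbin k hk.1 hk.2
    nlinarith
  · intro hmsum k hk1 hkM
    by_contra hcon
    push_neg at hcon
    set SX : ℝ := (X.map fun j : Fin M => ((j:ℕ):ℝ)+1).sum with hSX
    set SY : ℝ := (Y.map fun j : Fin M => ((j:ℕ):ℝ)+1).sum with hSY
    have hSX0 : 0 ≤ SX := by
      apply Multiset.sum_nonneg
      intro x hx
      obtain ⟨j, _, rfl⟩ := Multiset.mem_map.mp hx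
      positivity
    have hSY0 : 0 ≤ SY := by
      apply Multiset.sum_nonneg
      intro x hx
      obtain ⟨j, _, rfl⟩ := Multiset.mem_map.mp hx
      positivity
    set c : ℝ := SX + 1 with hc
    have hc0 : (0:ℝ) < c := by linarith
    set u : Fin M → ℝ := fun j => (if k ≤ (j:ℕ)+1 then 1 else 0) + (((j:ℕ):ℝ)+1)/c with hu
    have hcons : ConsistentF u := by
      constructor
      · intro j
        have hpos : (0:ℝ) < (((j:ℕ):ℝ)+1)/c := by positivity
        by_cases h : k ≤ (j:ℕ)+1 <;> simp only [hu, h, if_true, if_false] <;> linarith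
      · intro j j'
        constructor
        · intro hgt
          by_contra hle
          push_neg at hle
          have hle' : (j:ℕ) ≤ (j':ℕ) := hle
          have h1 : (((j:ℕ):ℝ)+1)/c ≤ (((j':ℕ):ℝ)+1)/c := by
            gcongr
            all_goals exact_mod_cast hle'
          have h2 : (if k ≤ (j:ℕ)+1 then (1:ℝ) else 0) ≤ (if k ≤ (j':ℕ)+1 then 1 else 0) := by
            by_cases h : k ≤ (j:ℕ)+1
            · have h' : k ≤ (j':ℕ)+1 := by omega
              simp [h, h']
            · by_cases h' : k ≤ (j':ℕ)+1 <;> simp [h, h']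
          simp only [hu] at hgt
          linarith
        · intro hlt
          have hlt' : (j':ℕ) < (j:ℕ) := hlt
          have h1 : (((j':ℕ):ℝ)+1)/c < (((j:ℕ):ℝ)+1)/c := by
            gcongr
            all_goals exact_mod_cast hlt'
          have h2 : (if k ≤ (j':ℕ)+1 then (1:ℝ) else 0) ≤ (if k ≤ (j:ℕ)+1 then 1 else 0) := by
            by_cases h : k ≤ (j':ℕ)+1
            · have h' : k ≤ (j:ℕ)+1 := by omega
              simp [h, h']
            · by_cases h' : k ≤ (j:ℕ)+1 <;> simp [h, h']
          simp only [hu, gt_iff_lt]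
          linarith
    have hineq := hmsum u hcons
    rw [hu, msum_split, msum_split] at hineq
    have hY0 : (0:ℝ) ≤ SY/c := by positivity
    have hX1 : SX/c < 1 := by
      rw [div_lt_one hc0]
      linarith
    have hcst : (Ubin k X : ℝ) + 1 ≤ (Ubin k Y : ℝ) := by exact_mod_cast hcon
    rw [← hSX, ← hSY] at hineq
    linarith
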